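/- arXiv:1012.3941 — 5 statements merged into one kernel-verified Lean document; each statement's English description precedes it below -/
import Mathlib

section
/- The function A(λ,t) = π λ² cosh(2t/λ) sinh(2/λ) + 2πλ, defined for λ > 0 and t ∈ ℝ, tends to infinity as |(log λ, t)| → ∞; that is, for every M > 0 there exists R > 0 such that A(λ,t) > M whenever (log λ)² + t² > R². -/
/-!
The first two terms of the power series of `cosh` and `sinh` give
`A(λ, t) ≥ 3 (4λ + (4/3) λ⁻¹ + 4 t² λ⁻¹) ≥ λ + λ⁻¹ + |t|`, using `2|t| ≤ λ + t²/λ`.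
Since `λ + λ⁻¹ ≥ exp |log λ| > |log λ|`, the area dominates the `ℓ¹` norm `|log λ| + |t|`,
which in turn dominates the Euclidean norm of `(log λ, t)`.
-/

open Real

lemma one_add_sq_div_two_le_cosh (x : ℝ) : 1 + x ^ 2 / 2 ≤ cosh x := by
  have h := sum_le_hasSum (Finset.range 2)
    (fun n _ => by rw [pow_mul]; positivity) (hasSum_cosh x)
  simpa [Finset.sum_range_succ] using h

lemma add_pow_three_div_six_le_sinh {x : ℝ} (hx : 0 ≤ x) : x + x ^ 3 / 6 ≤ sinh x := by
  have h := sum_le_hasSum (Finset.range 2)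
    (fun n _ => by positivity) (hasSum_sinh x)
  norm_num [Finset.sum_range_succ, Nat.factorial] at h
  exact h

lemma exp_abs_log_le_add_inv {x : ℝ} (hx : 0 < x) : exp |log x| ≤ x + x⁻¹ := by
  rcases abs_choice (log x) with h | h <;> rw [h]
  · rw [exp_log hx]; linarith [inv_pos.2 hx]
  · rw [exp_neg, exp_log hx]; linarith

noncomputable def catenoidSlabArea (lam t : ℝ) : ℝ :=
  π * lam ^ 2 * cosh (2 * t / lam) * sinh (2 / lam) + 2 * π * lam

lemma add_inv_add_abs_le_catenoidSlabArea {lam : ℝ} (hlam : 0 < lam) (t : ℝ) :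
    lam + lam⁻¹ + |t| ≤ catenoidSlabArea lam t := by
  have hinv : 0 < lam⁻¹ := inv_pos.2 hlam
  have hprod : lam ^ 2 * ((1 + (2 * t / lam) ^ 2 / 2) * (2 / lam + (2 / lam) ^ 3 / 6))
      ≤ lam ^ 2 * (cosh (2 * t / lam) * sinh (2 / lam)) := by
    gcongr
    · exact one_add_sq_div_two_le_cosh _
    · exact add_pow_three_div_six_le_sinh (by positivity)
  have hexpand : lam ^ 2 * ((1 + (2 * t / lam) ^ 2 / 2) * (2 / lam + (2 / lam) ^ 3 / 6))
      = 2 * lam + 4 / 3 * lam⁻¹ + 4 * t ^ 2 * lam⁻¹ + 8 / 3 * t ^ 2 * lam⁻¹ ^ 3 := by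
    field_simp
    ring
  have hamgm : 2 * |t| ≤ lam + t ^ 2 * lam⁻¹ := by
    have := two_mul_le_add_sq lam |t|
    rw [sq_abs] at this
    calc 2 * |t| = (2 * lam * |t|) * lam⁻¹ := by field_simp
      _ ≤ (lam ^ 2 + t ^ 2) * lam⁻¹ := by gcongr
      _ = lam + t ^ 2 * lam⁻¹ := by field_simp
  have hlower : 4 * lam + 4 / 3 * lam⁻¹ + 4 * t ^ 2 * lam⁻¹
      ≤ lam ^ 2 * (cosh (2 * t / lam) * sinh (2 / lam)) + 2 * lam := by
    nlinarith [pow_pos hinv 3, sq_nonneg t]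
  calc lam + lam⁻¹ + |t| ≤ 3 * (4 * lam + 4 / 3 * lam⁻¹ + 4 * t ^ 2 * lam⁻¹) := by
        nlinarith [sq_nonneg t]
    _ ≤ π * (lam ^ 2 * (cosh (2 * t / lam) * sinh (2 / lam)) + 2 * lam) := by
        gcongr
        exact pi_gt_three.le
    _ = catenoidSlabArea lam t := by unfold catenoidSlabArea; ring

lemma abs_log_add_abs_lt_catenoidSlabArea {lam : ℝ} (hlam : 0 < lam) (t : ℝ) :
    |log lam| + |t| < catenoidSlabArea lam t := by
  calc |log lam| + |t| < exp |log lam| + |t| := by linarith [add_one_le_exp |log lam|]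
    _ ≤ lam + lam⁻¹ + |t| := by gcongr; exact exp_abs_log_le_add_inv hlam
    _ ≤ catenoidSlabArea lam t := add_inv_add_abs_le_catenoidSlabArea hlam t

theorem stmt_0 :
    ∀ M > (0:ℝ), ∃ R > (0:ℝ), ∀ lam t : ℝ, 0 < lam →
      (Real.log lam)^2 + t^2 > R^2 →
      π * lam^2 * Real.cosh (2*t/lam) * Real.sinh (2/lam) + 2*π*lam > M := by
  intro M hM
  refine ⟨M, hM, fun lam t hlam hR => ?_⟩
  have hnorm : M < |log lam| + |t| := by
    refine lt_of_pow_lt_pow_left₀ 2 (by positivity) ?_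
    nlinarith [sq_abs (log lam), sq_abs t, abs_nonneg (log lam), abs_nonneg t]
  exact hnorm.trans (abs_log_add_abs_lt_catenoidSlabArea hlam t)
end

section
/- The equation 2λ/(1 - λ²) = sinh(2/λ) has exactly one solution λ in the set (0,1) ∪ (1,∞), and this solution lies in (0,1). -/
open Real Set

/-!
On `(0, 1)` the map `λ ↦ 2λ/(1-λ²) - sinh (2/λ)` is strictly increasing, and it is negative at
`1/2` (since `sinh 4 > 4`) and positive at `8/9` (since `sinh (9/4) < 5 < 144/17`), so it has
exactly one zero there. For `λ > 1` the left-hand side is negative and `sinh (2/λ)` positive.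
-/

lemma strictMonoOn_two_mul_div_one_sub_sq :
    StrictMonoOn (fun x : ℝ => 2 * x / (1 - x ^ 2)) (Ioo (-1) 1) := by
  intro x ⟨hx₁, hx₂⟩ y ⟨hy₁, hy₂⟩ hxy
  rw [div_lt_div_iff₀ (by nlinarith) (by nlinarith)]
  nlinarith [mul_pos (sub_pos.2 hxy) (show 0 < 1 + x * y by nlinarith)]

lemma two_mul_div_one_sub_sq_neg {x : ℝ} (hx : 1 < x) : 2 * x / (1 - x ^ 2) < 0 :=
  div_neg_of_pos_of_neg (by linarith) (by nlinarith)

lemma strictAntiOn_sinh_div {c : ℝ} (hc : 0 < c) :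
    StrictAntiOn (fun x : ℝ => sinh (c / x)) (Ioi 0) :=
  fun _ hx _ _ hxy => sinh_lt_sinh.2 (div_lt_div_of_pos_left hc hx hxy)

lemma exp_nine_fourths_lt_ten : exp (9 / 4) < 10 := by
  have h : exp (9 / 4) ^ 4 < 10 ^ 4 :=
    calc exp (9 / 4) ^ 4 = exp 1 ^ 9 := by rw [← exp_nat_mul, ← exp_nat_mul]; norm_num
      _ < 2.7182818286 ^ 9 := pow_lt_pow_left₀ exp_one_lt_d9 (exp_pos 1).le (by norm_num)
      _ < 10 ^ 4 := by norm_num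
  exact lt_of_pow_lt_pow_left₀ 4 (by norm_num) h

lemma sinh_nine_fourths_lt_five : sinh (9 / 4) < 5 := by
  rw [sinh_eq]
  linarith [exp_nine_fourths_lt_ten, exp_pos (-(9 / 4))]

noncomputable def sinhGap (x : ℝ) : ℝ := 2 * x / (1 - x ^ 2) - sinh (2 / x)

lemma sinhGap_eq_zero_iff {x : ℝ} : sinhGap x = 0 ↔ 2 * x / (1 - x ^ 2) = sinh (2 / x) :=
  sub_eq_zero

lemma strictMonoOn_sinhGap : StrictMonoOn sinhGap (Ioo 0 1) := by
  intro x hx y hy hxy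
  have hlhs := strictMonoOn_two_mul_div_one_sub_sq
    ⟨by linarith [hx.1], hx.2⟩ ⟨by linarith [hy.1], hy.2⟩ hxy
  have hrhs := strictAntiOn_sinh_div two_pos hx.1 hy.1 hxy
  simp only [sinhGap] at hlhs hrhs ⊢
  linarith

lemma continuousOn_sinhGap : ContinuousOn sinhGap (Ioo 0 1) := by
  refine ContinuousOn.sub (ContinuousOn.div (by fun_prop) (by fun_prop) fun x hx => ?_)
    (continuous_sinh.comp_continuousOn (continuousOn_const.div continuousOn_id fun x hx => ?_))
  · nlinarith [hx.1, hx.2]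
  · exact hx.1.ne'

lemma sinhGap_one_half_neg : sinhGap (1 / 2) < 0 := by
  have h : (4 : ℝ) < sinh 4 := self_lt_sinh_iff.2 (by norm_num)
  norm_num [sinhGap]
  linarith

lemma sinhGap_eight_ninths_pos : 0 < sinhGap (8 / 9) := by
  norm_num [sinhGap]
  linarith [sinh_nine_fourths_lt_five]

lemma exists_sinhGap_eq_zero : ∃ c ∈ Ioo (0 : ℝ) 1, sinhGap c = 0 := by
  have hsub : Icc (1 / 2 : ℝ) (8 / 9) ⊆ Ioo 0 1 := Icc_subset_Ioo (by norm_num) (by norm_num)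
  obtain ⟨c, hc, hc₀⟩ := intermediate_value_Icc (by norm_num) (continuousOn_sinhGap.mono hsub)
    ⟨sinhGap_one_half_neg.le, sinhGap_eight_ninths_pos.le⟩
  exact ⟨c, hsub hc, hc₀⟩

theorem stmt_3 :
    ∃ lam₀ ∈ Set.Ioo (0:ℝ) 1,
      2*lam₀/(1-lam₀^2) = Real.sinh (2/lam₀) ∧
      ∀ lam ∈ Set.Ioo (0:ℝ) 1 ∪ Set.Ioi (1:ℝ),
        2*lam/(1-lam^2) = Real.sinh (2/lam) → lam = lam₀ := by
  obtain ⟨c, hc, hc₀⟩ := exists_sinhGap_eq_zero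
  refine ⟨c, hc, sinhGap_eq_zero_iff.1 hc₀, fun lam hlam heq => ?_⟩
  rcases hlam with hlam | hlam
  · exact strictMonoOn_sinhGap.injOn hlam hc (by rw [sinhGap_eq_zero_iff.2 heq, hc₀])
  · have hrhs : 0 < sinh (2 / lam) := sinh_pos_iff.2 (div_pos two_pos (by linarith [mem_Ioi.1 hlam]))
    linarith [two_mul_div_one_sub_sq_neg (mem_Ioi.1 hlam)]
end

section
/- Let G be a holomorphic function on the annulus A = {z ∈ ℂ : r < |z| < R}, with 0 < r < ρ < R, and let a₀ = (1/(2π)) ∫_{|z|=ρ} G(z) |dz|/|z| be the average of G over the circle |z| = ρ. Then ρ² ∫_{|z|=ρ} Δ|G|² |dz|/|z| ≥ 4 ∫_{|z|=ρ} |G|² |dz|/|z| − 8π |a₀|², where Δ|G|² = 4|G′|². -/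
/-! On the circle, `f θ = G (ρ e^{iθ})` is a `2π`-periodic function with `|f'| = ρ |G'|`.
Integrating by parts, periodicity kills the boundary term, so the Fourier coefficients satisfy
`in · cₙ(f) = cₙ(f')`; hence `|cₙ(f)| ≤ |cₙ(f')|` for `n ≠ 0`, and Parseval turns this into
Wirtinger's inequality `⨍ |f|² ≤ ⨍ |f'|² + |c₀(f)|²`, where `c₀(f)` is the mean `a₀` of `G`. -/

open Real Complex MeasureTheory Set Metric
open scoped ENNReal

theorem ContinuousOn.memLp_restrict_Ioc {E : Type*} [NormedAddCommGroup E] {f : ℝ → E}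
    {a b : ℝ} (hf : ContinuousOn f (Icc a b)) (p : ℝ≥0∞) :
    MemLp f p (volume.restrict (Ioc a b)) := by
  obtain ⟨C, hC⟩ := isCompact_Icc.exists_bound_of_continuousOn hf
  have hbdd : MemLp f ∞ (volume.restrict (Icc a b)) :=
    memLp_top_of_bound (hf.aestronglyMeasurable measurableSet_Icc) C
      (ae_restrict_of_forall_mem measurableSet_Icc hC)
  exact (hbdd.mono_exponent le_top).mono_measure (Measure.restrict_mono Ioc_subset_Icc_self le_rfl)

theorem fourierCoeffOn_zero {E : Type*} [NormedAddCommGroup E] [NormedSpace ℂ E] {a b : ℝ}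
    (hab : a < b) (f : ℝ → E) :
    fourierCoeffOn hab f 0 = ⨍ x in a..b, f x := by
  rw [fourierCoeffOn_eq_integral, interval_average_eq]
  simp

theorem fourierCoeffOn_of_hasDerivAt_of_eq {a b : ℝ} (hab : a < b) {f f' : ℝ → ℂ} {n : ℤ}
    (hn : n ≠ 0) (hf : ∀ x ∈ Icc a b, HasDerivAt f (f' x) x)
    (hf' : IntervalIntegrable f' volume a b) (hfab : f a = f b) :
    fourierCoeffOn hab f n = (b - a) / (2 * π * I * n) * fourierCoeffOn hab f' n := by
  rw [fourierCoeffOn_of_hasDerivAt hab hn (by rwa [uIcc_of_le hab.le]) hf', hfab, sub_self,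
    mul_zero, zero_sub]
  have : (n : ℂ) ≠ 0 := Int.cast_ne_zero.mpr hn
  field_simp

theorem norm_fourierCoeffOn_le_of_hasDerivAt_of_eq {a b : ℝ} (hab : a < b) {f f' : ℝ → ℂ} {n : ℤ}
    (hn : n ≠ 0) (hf : ∀ x ∈ Icc a b, HasDerivAt f (f' x) x)
    (hf' : IntervalIntegrable f' volume a b) (hfab : f a = f b) :
    ‖fourierCoeffOn hab f n‖ ≤ (b - a) / (2 * π) * ‖fourierCoeffOn hab f' n‖ := by
  have hn1 : (1 : ℝ) ≤ |(n : ℝ)| := by exact_mod_cast Int.one_le_abs hn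
  have hnorm : ‖((b : ℂ) - a) / (2 * π * I * n)‖ = (b - a) / (2 * π * |(n : ℝ)|) := by
    rw [norm_div, ← ofReal_sub, norm_real, Real.norm_of_nonneg (sub_pos.mpr hab).le]
    simp [abs_of_pos pi_pos]
  rw [fourierCoeffOn_of_hasDerivAt_of_eq hab hn hf hf' hfab, norm_mul, hnorm]
  refine mul_le_mul_of_nonneg_right ?_ (norm_nonneg _)
  exact div_le_div_of_nonneg_left (sub_pos.mpr hab).le two_pi_pos
    (le_mul_of_one_le_right two_pi_pos.le hn1)

theorem wirtinger_inequality {a b : ℝ} (hab : a < b) {f f' : ℝ → ℂ}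
    (hf : ∀ x ∈ Icc a b, HasDerivAt f (f' x) x) (hf' : MemLp f' 2 (volume.restrict (Ioc a b)))
    (hfab : f a = f b) :
    ⨍ x in a..b, ‖f x‖ ^ 2 ≤
      ((b - a) / (2 * π)) ^ 2 * (⨍ x in a..b, ‖f' x‖ ^ 2) + ‖⨍ x in a..b, f x‖ ^ 2 := by
  have hf'_int : IntervalIntegrable f' volume a b :=
    (intervalIntegrable_iff_integrableOn_Ioc_of_le hab.le).2 (hf'.integrable one_le_two)
  have hf_L2 : MemLp f 2 (volume.restrict (Ioc a b)) :=
    ContinuousOn.memLp_restrict_Ioc (fun x hx ↦ (hf x hx).continuousAt.continuousWithinAt) 2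
  have parseval_f := hasSum_sq_fourierCoeffOn hab hf_L2
  have parseval_f' := (hasSum_sq_fourierCoeffOn hab hf').mul_left (((b - a) / (2 * π)) ^ 2)
  rw [← interval_average_eq] at parseval_f parseval_f'
  rw [← fourierCoeffOn_zero hab]
  refine hasSum_le (fun n ↦ ?_) parseval_f
    (parseval_f'.add (hasSum_ite_eq 0 (‖fourierCoeffOn hab f 0‖ ^ 2)))
  rcases eq_or_ne n 0 with rfl | hn
  · simp only [if_pos, le_add_iff_nonneg_left]
    positivity
  · rw [if_neg hn, add_zero, ← mul_pow]
    exact pow_le_pow_left₀ (norm_nonneg _)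
      (norm_fourierCoeffOn_le_of_hasDerivAt_of_eq hab hn hf hf'_int hfab) 2

theorem integral_circleMap_eq_two_pi_smul_circleAverage {E : Type*} [NormedAddCommGroup E]
    [NormedSpace ℝ E] (f : ℂ → E) (c : ℂ) (R : ℝ) :
    ∫ θ in 0..2 * π, f (circleMap c R θ) = (2 * π) • circleAverage f c R := by
  rw [circleAverage_def, smul_inv_smul₀ two_pi_pos.ne']

theorem circleAverage_norm_sq_le {G : ℂ → ℂ} {U : Set ℂ} {c : ℂ} {ρ : ℝ} (hU : IsOpen U)
    (hG : DifferentiableOn ℂ G U) (hρ : sphere c |ρ| ⊆ U) :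
    circleAverage (fun z ↦ ‖G z‖ ^ 2) c ρ ≤
      ρ ^ 2 * circleAverage (fun z ↦ ‖deriv G z‖ ^ 2) c ρ + ‖circleAverage G c ρ‖ ^ 2 := by
  have hmem : ∀ θ, circleMap c ρ θ ∈ U := fun θ ↦ hρ (circleMap_mem_sphere' c ρ θ)
  have hderiv : ∀ θ, HasDerivAt (fun θ ↦ G (circleMap c ρ θ))
      (deriv G (circleMap c ρ θ) * (circleMap 0 ρ θ * I)) θ := fun θ ↦
    (hG.differentiableAt (hU.mem_nhds (hmem θ))).hasDerivAt.comp θ (hasDerivAt_circleMap c ρ θ)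
  have hderiv_cont : Continuous fun θ ↦ deriv G (circleMap c ρ θ) * (circleMap 0 ρ θ * I) :=
    ((hG.analyticOnNhd hU).deriv.continuousOn.comp_continuous (continuous_circleMap c ρ)
      hmem).mul (by fun_prop)
  have hperiod : G (circleMap c ρ 0) = G (circleMap c ρ (2 * π)) := by
    rw [← zero_add (2 * π), periodic_circleMap]
  have hnorm (θ : ℝ) : ‖deriv G (circleMap c ρ θ) * (circleMap 0 ρ θ * I)‖ ^ 2 =
      ρ ^ 2 * ‖deriv G (circleMap c ρ θ)‖ ^ 2 := by
    rw [norm_mul, norm_mul, norm_circleMap_zero, norm_I, mul_one, mul_pow, sq_abs, mul_comm]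
  have h := wirtinger_inequality two_pi_pos (fun θ _ ↦ hderiv θ)
    (hderiv_cont.continuousOn.memLp_restrict_Ioc 2) hperiod
  simp only [hnorm, sub_zero, div_self two_pi_pos.ne', one_pow, one_mul] at h
  rw [← smul_eq_mul, ← circleAverage_fun_smul]
  simpa only [circleAverage_eq_intervalAverage, smul_eq_mul] using h

theorem stmt_7 (r R ρ : ℝ) (hr : 0 < r) (h1 : r < ρ) (h2 : ρ < R)
    (G : ℂ → ℂ)
    (hG : DifferentiableOn ℂ G {z : ℂ | r < ‖z‖ ∧ ‖z‖ < R}) :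
    4 * (∫ θ in (0:ℝ)..(2*Real.pi), ‖G (ρ * Complex.exp (θ * Complex.I))‖^2)
      - 8*Real.pi*‖(2*(Real.pi:ℂ))⁻¹ *
          ∫ θ in (0:ℝ)..(2*Real.pi), G (ρ * Complex.exp (θ * Complex.I))‖^2
    ≤ ρ^2 * ∫ θ in (0:ℝ)..(2*Real.pi),
        4 * ‖deriv G (ρ * Complex.exp (θ * Complex.I))‖^2 := by
  have hρ : 0 < ρ := hr.trans h1
  have hU : IsOpen {z : ℂ | r < ‖z‖ ∧ ‖z‖ < R} :=
    (isOpen_lt continuous_const continuous_norm).inter (isOpen_lt continuous_norm continuous_const)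
  have hsphere : sphere 0 |ρ| ⊆ {z : ℂ | r < ‖z‖ ∧ ‖z‖ < R} := fun z hz ↦ by
    rw [mem_sphere_zero_iff_norm, abs_of_pos hρ] at hz
    exact ⟨hz ▸ h1, hz ▸ h2⟩
  have h := circleAverage_norm_sq_le hU hG hsphere
  have hmean : (2 * (π : ℂ))⁻¹ * ∫ θ in 0..2 * π, G (circleMap 0 ρ θ) = circleAverage G 0 ρ := by
    rw [circleAverage_def, Complex.real_smul]
    push_cast
    rfl
  simp_rw [← circleMap_zero, intervalIntegral.integral_const_mul, hmean]
  rw [integral_circleMap_eq_two_pi_smul_circleAverage (fun z ↦ ‖G z‖ ^ 2),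
    integral_circleMap_eq_two_pi_smul_circleAverage (fun z ↦ ‖deriv G z‖ ^ 2), smul_eq_mul,
    smul_eq_mul]
  nlinarith [mul_le_mul_of_nonneg_left h pi_pos.le]
end

section
/- Let G be holomorphic on an annulus containing the circle |z| = ρ, with Laurent expansion G(z) = Σ_{n∈ℤ} aₙ zⁿ. If the Laurent coefficients of F = G² satisfy that the constant (n = 0) coefficient of F vanishes, i.e. a₀² + 2 Σ_{n≥1} aₙ a₋ₙ = 0, then 4π |a₀|² ≤ ∫_{|z|=ρ} |G(z)|² |dz|/|z| = 2π Σ_{n∈ℤ} |aₙ|² ρ^{2n}. -/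
/-!
On the circle `|z| = ρ` the Laurent series of `G` is an absolutely convergent Fourier series
with coefficients `cₙ = aₙ ρⁿ`, so integrating term by term (dominated convergence) gives
Parseval's identity `∫ |G|² = 2π Σ |cₙ|²`. Since `cₙ c₋ₙ = aₙ a₋ₙ`, the hypothesis says
`c₀² = -2 Σ_{n ≥ 1} cₙ c₋ₙ`, and AM–GM on each product gives `|c₀|² ≤ Σ_{n ≠ 0} |cₙ|²`,
i.e. `2 |a₀|² ≤ Σ |cₙ|²`.
-/

open Real Complex ComplexConjugate

theorem hasSum_intervalIntegral_of_summable_bound {ι E : Type*} [Countable ι]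
    [NormedAddCommGroup E] [NormedSpace ℝ E] {F : ι → ℝ → E} {f : ℝ → E} {b : ι → ℝ}
    (hF : ∀ n, Continuous (F n)) (hb : Summable b) (hFb : ∀ n t, ‖F n t‖ ≤ b n)
    (hf : ∀ t, HasSum (fun n => F n t) (f t)) (α β : ℝ) :
    HasSum (fun n => ∫ t in α..β, F n t) (∫ t in α..β, f t) :=
  intervalIntegral.hasSum_integral_of_dominated_convergence (fun n _ => b n)
    (fun n => (hF n).aestronglyMeasurable) (fun n => .of_forall fun t _ => hFb n t)
    (.of_forall fun _ _ => hb) intervalIntegrable_const (.of_forall fun t _ => hf t)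

theorem integral_exp_int_mul_I (n : ℤ) :
    ∫ θ in (0 : ℝ)..2 * π, exp (n * θ * I) = if n = 0 then (2 * π : ℂ) else 0 := by
  rcases eq_or_ne n 0 with rfl | hn
  · simp
  have hnI : (n : ℂ) * I ≠ 0 := by simp [hn]
  simp_rw [if_neg hn, mul_right_comm _ _ I, integral_exp_mul_complex hnI]
  have hperiod : (n : ℂ) * I * ↑(2 * π) = n * (2 * π * I) := by push_cast; ring
  rw [hperiod, exp_int_mul_two_pi_mul_I]
  simp

theorem ofReal_mul_exp_mul_I_zpow (ρ θ : ℝ) (n : ℤ) :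
    ((ρ : ℂ) * exp (θ * I)) ^ n = (ρ : ℂ) ^ n * exp (n * θ * I) := by
  rw [mul_zpow, ← exp_int_mul, mul_assoc]

def HasFourierSum (c : ℤ → ℂ) (f : ℝ → ℂ) : Prop :=
  ∀ θ : ℝ, HasSum (fun n : ℤ => c n * exp (n * θ * I)) (f θ)

section AbsolutelyConvergentFourierSeries

variable {c : ℤ → ℂ} {f : ℝ → ℂ}

theorem norm_le_tsum_norm_of_hasSum_exp (hc : Summable c)
    (hf : HasFourierSum c f) (θ : ℝ) :
    ‖f θ‖ ≤ ∑' n, ‖c n‖ :=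
  (hf θ).norm_le_of_bounded (summable_norm_iff.mpr hc).hasSum fun n => by
    simp [Complex.norm_exp]

theorem continuous_of_hasSum_exp (hc : Summable c)
    (hf : HasFourierSum c f) : Continuous f := by
  rw [show f = fun θ : ℝ => ∑' n : ℤ, c n * exp (n * θ * I) from
    funext fun θ => (hf θ).tsum_eq.symm]
  exact continuous_tsum (fun n => by fun_prop) (summable_norm_iff.mpr hc) fun n θ => by
    simp [Complex.norm_exp]

theorem integral_mul_exp_neg_of_hasSum_exp (hc : Summable c)
    (hf : HasFourierSum c f) (m : ℤ) :
    ∫ θ in (0 : ℝ)..2 * π, f θ * exp (-(m * θ * I)) = 2 * π * c m := by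
  have hsum := hasSum_intervalIntegral_of_summable_bound
    (F := fun n θ => c n * exp (n * θ * I) * exp (-(m * θ * I))) (fun n => by fun_prop)
    (summable_norm_iff.mpr hc) (fun n θ => by simp [Complex.norm_exp])
    (fun θ => (hf θ).mul_right _) 0 (2 * π)
  have hterm : ∀ n : ℤ, ∫ θ in (0 : ℝ)..2 * π, c n * exp (n * θ * I) * exp (-(m * θ * I))
      = if n = m then 2 * π * c m else 0 := by
    intro n
    have hphase : ∀ θ : ℝ, exp (n * θ * I) * exp (-(m * θ * I)) = exp ((n - m : ℤ) * θ * I) :=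
      fun θ => by rw [← Complex.exp_add]; push_cast; ring_nf
    simp_rw [mul_assoc (c n), hphase, intervalIntegral.integral_const_mul,
      integral_exp_int_mul_I, sub_eq_zero]
    split_ifs with h
    · rw [h, mul_comm]
    · rw [mul_zero]
  exact hsum.unique (by simpa only [hterm] using hasSum_ite_eq m (2 * π * c m))

theorem hasSum_two_pi_mul_sq_norm_of_hasSum_exp (hc : Summable c)
    (hf : HasFourierSum c f) :
    HasSum (fun n => 2 * π * ‖c n‖ ^ 2) (∫ θ in (0 : ℝ)..2 * π, ‖f θ‖ ^ 2) := by
  have hconj : ∀ θ : ℝ, HasSum (fun n : ℤ => f θ * (conj (c n) * exp (-(n * θ * I))))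
      (f θ * conj (f θ)) := fun θ => by
    have hconj_term : ∀ n : ℤ, conj (c n * exp (n * θ * I)) = conj (c n) * exp (-(n * θ * I)) :=
      fun n => by simp [← exp_conj]
    simpa only [hconj_term] using (hasSum_conj'.mpr (hf θ)).mul_left (f θ)
  have hf_cont := continuous_of_hasSum_exp hc hf
  have hsum := hasSum_intervalIntegral_of_summable_bound (fun n => by fun_prop)
    ((summable_norm_iff.mpr hc).mul_left (∑' n, ‖c n‖)) (fun n θ => by
      simpa [Complex.norm_exp, mul_comm ‖c n‖] using
        mul_le_mul_of_nonneg_right (norm_le_tsum_norm_of_hasSum_exp hc hf θ) (norm_nonneg (c n)))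
    hconj 0 (2 * π)
  have hterm : ∀ n : ℤ, ∫ θ in (0 : ℝ)..2 * π, f θ * (conj (c n) * exp (-(n * θ * I)))
      = ((2 * π * ‖c n‖ ^ 2 : ℝ) : ℂ) := fun n => by
    simp_rw [mul_left_comm (f _), intervalIntegral.integral_const_mul,
      integral_mul_exp_neg_of_hasSum_exp hc hf n, mul_left_comm _ (2 * π : ℂ), mul_comm (conj _),
      mul_conj']
    push_cast; ring
  simp_rw [hterm, mul_conj', ← ofReal_pow, intervalIntegral.integral_ofReal] at hsum
  exact hasSum_ofReal.mp hsum

end AbsolutelyConvergentFourierSeries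

theorem two_mul_sq_norm_zero_le_tsum_sq_norm {c : ℤ → ℂ} (hc : Summable fun n => ‖c n‖ ^ 2)
    (h0 : c 0 ^ 2 + 2 * ∑' n : ℕ, c (n + 1) * c (-(n + 1)) = 0) :
    2 * ‖c 0‖ ^ 2 ≤ ∑' n, ‖c n‖ ^ 2 := by
  set p : ℕ → ℝ := fun n => ‖c (n + 1)‖
  set q : ℕ → ℝ := fun n => ‖c (-(n + 1))‖
  have hp : Summable fun n => p n ^ 2 :=
    hc.comp_injective fun m n h => by simpa using h
  have hq : Summable fun n => q n ^ 2 :=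
    hc.comp_injective fun m n h => by simpa using h
  have hpq_le : ∀ n, 2 * (p n * q n) ≤ p n ^ 2 + q n ^ 2 := fun n => by
    nlinarith [sq_nonneg (p n - q n)]
  have hpq : Summable fun n => p n * q n :=
    .of_nonneg_of_le (fun n => by positivity) (fun n => by linarith [hpq_le n])
      ((hp.add hq).div_const 2)
  have hsplit : ∑' n, ‖c n‖ ^ 2 = ∑' n, p n ^ 2 + ‖c 0‖ ^ 2 + ∑' n, q n ^ 2 :=
    tsum_of_add_one_of_neg_add_one hp hq
  have hcenter : ‖c 0‖ ^ 2 ≤ 2 * ∑' n, p n * q n :=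
    calc ‖c 0‖ ^ 2 = 2 * ‖∑' n : ℕ, c (n + 1) * c (-(n + 1))‖ := by
          rw [← norm_pow, eq_neg_of_add_eq_zero_left h0, norm_neg, norm_mul]; norm_num
      _ ≤ 2 * ∑' n, p n * q n := by
          gcongr
          exact norm_tsum_le_tsum_norm (by simpa [p, q] using hpq) |>.trans_eq (by simp [p, q])
  have hAMGM : 2 * ∑' n, p n * q n ≤ ∑' n, p n ^ 2 + ∑' n, q n ^ 2 := by
    rw [← tsum_mul_left, ← hp.tsum_add hq]
    exact Summable.tsum_le_tsum hpq_le (hpq.mul_left 2) (hp.add hq)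
  linarith

theorem stmt_8_general (r R ρ : ℝ) (hr : 0 < r) (h1 : r < ρ) (h2 : ρ < R)
    (G : ℂ → ℂ) (a : ℤ → ℂ)
    (hLaurent : ∀ z : ℂ, r < ‖z‖ → ‖z‖ < R →
      HasSum (fun n : ℤ => a n * z ^ n) (G z))
    (hcoef : (a 0)^2 + 2 * ∑' n : ℕ, a ((n:ℤ)+1) * a (-((n:ℤ)+1)) = 0) :
    (∫ θ in (0:ℝ)..(2*Real.pi), ‖G (ρ * Complex.exp (θ * Complex.I))‖^2)
        = 2*Real.pi * ∑' n : ℤ, ‖a n‖^2 * ρ^(2*n) ∧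
    4*Real.pi*‖a 0‖^2 ≤
      ∫ θ in (0:ℝ)..(2*Real.pi), ‖G (ρ * Complex.exp (θ * Complex.I))‖^2 := by
  have hρ : 0 < ρ := hr.trans h1
  set c : ℤ → ℂ := fun n => a n * (ρ : ℂ) ^ n
  have hf : HasFourierSum c fun θ => G (ρ * exp (θ * I)) := by
    intro θ
    have hz : ‖(ρ : ℂ) * exp (θ * I)‖ = ρ := by simp [hρ.le]
    have := hLaurent _ (by rw [hz]; exact h1) (by rw [hz]; exact h2)
    simp_rw [ofReal_mul_exp_mul_I_zpow, ← mul_assoc] at this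
    exact this
  have hc : Summable c := by simpa using (hf 0).summable
  have hparseval := hasSum_two_pi_mul_sq_norm_of_hasSum_exp hc hf
  have hnorm : ∀ n, ‖c n‖ ^ 2 = ‖a n‖ ^ 2 * ρ ^ (2 * n) := fun n => by
    rw [norm_mul, norm_zpow, norm_real, Real.norm_of_nonneg hρ.le, mul_pow,
      ← zpow_natCast (ρ ^ n), ← zpow_mul, mul_comm n]
    rfl
  have hcoef_c : c 0 ^ 2 + 2 * ∑' n : ℕ, c (n + 1) * c (-(n + 1)) = 0 := by
    have hpair : ∀ n : ℤ, c n * c (-n) = a n * a (-n) := fun n => by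
      rw [mul_mul_mul_comm, ← zpow_add₀ (ofReal_ne_zero.mpr hρ.ne'), add_neg_cancel, zpow_zero,
        mul_one]
    simpa only [hpair, c, zpow_zero, mul_one] using hcoef
  rw [← hparseval.tsum_eq, tsum_mul_left]
  refine ⟨by simp_rw [hnorm], ?_⟩
  have := two_mul_sq_norm_zero_le_tsum_sq_norm
    ((summable_mul_left_iff (by positivity)).mp hparseval.summable) hcoef_c
  simp only [c, zpow_zero, mul_one] at this
  nlinarith [pi_pos]

theorem stmt_8 (r R ρ : ℝ) (hr : 0 < r) (h1 : r < ρ) (h2 : ρ < R)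
    (G : ℂ → ℂ) (a : ℤ → ℂ)
    (hG : DifferentiableOn ℂ G {z : ℂ | r < ‖z‖ ∧ ‖z‖ < R})
    (hLaurent : ∀ z : ℂ, r < ‖z‖ → ‖z‖ < R →
      HasSum (fun n : ℤ => a n * z ^ n) (G z))
    (hcoef : (a 0)^2 + 2 * ∑' n : ℕ, a ((n:ℤ)+1) * a (-((n:ℤ)+1)) = 0) :
    (∫ θ in (0:ℝ)..(2*Real.pi), ‖G (ρ * Complex.exp (θ * Complex.I))‖^2)
        = 2*Real.pi * ∑' n : ℤ, ‖a n‖^2 * ρ^(2*n) ∧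
    4*Real.pi*‖a 0‖^2 ≤
      ∫ θ in (0:ℝ)..(2*Real.pi), ‖G (ρ * Complex.exp (θ * Complex.I))‖^2 :=
  stmt_8_general r R ρ hr h1 h2 G a hLaurent hcoef
end

section
/- Let L : [a,b] → ℝ be a C² convex function attaining its minimum at the left endpoint a, with L' > 0 on (a,b), and satisfying L'' ≥ k² L on (a,b) for some k > 0. Let C : ℝ → ℝ satisfy C'' = k² C with C > 0. If C(a) ≤ L(a), L(a) < L(a+ε) for every sufficiently small ε > 0, and C'(a) = 0, then L(t) ≥ C(t) for all t ∈ [a,b]. -/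
open Real Set Filter Topology

theorem stmt_11 (a b k : ℝ) (hab : a < b) (hk : 0 < k)
    (L C : ℝ → ℝ) (hL : ContDiffOn ℝ 2 L (Set.Icc a b))
    (hconv : ConvexOn ℝ (Set.Icc a b) L)
    (hmin : ∀ t ∈ Set.Icc a b, L a ≤ L t)
    (hL' : ∀ t ∈ Set.Ioo a b, 0 < deriv L t)
    (hL'' : ∀ t ∈ Set.Ioo a b, k^2 * L t ≤ deriv (deriv L) t)
    (hC : ∀ t, C t = C a * Real.cosh (k*(t-a)))
    (hCa : 0 < C a) (hCL : C a ≤ L a) :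
    ∀ t ∈ Set.Icc a b, C t ≤ L t := by
  -- the explicit cosh solution and its derivatives
  set c : ℝ → ℝ := fun t => C a * Real.cosh (k*(t-a)) with hcdef
  set c1 : ℝ → ℝ := fun t => C a * (k * Real.sinh (k*(t-a))) with hc1def
  have hlin : ∀ t : ℝ, HasDerivAt (fun t : ℝ => k*(t-a)) k t := by
    intro t
    simpa using ((hasDerivAt_id t).sub_const a).const_mul k
  have hcd : ∀ t : ℝ, HasDerivAt c (c1 t) t := by
    intro t
    have h2 : HasDerivAt (fun t => Real.cosh (k*(t-a))) (Real.sinh (k*(t-a)) * k) t :=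
      (Real.hasDerivAt_cosh _).comp t (hlin t)
    have := h2.const_mul (C a)
    refine this.congr_deriv ?_
    simp only [hc1def]; ring
  have hc1d : ∀ t : ℝ, HasDerivAt c1 (k^2 * c t) t := by
    intro t
    have h2 : HasDerivAt (fun t => Real.sinh (k*(t-a))) (Real.cosh (k*(t-a)) * k) t :=
      (Real.hasDerivAt_sinh _).comp t (hlin t)
    have := (h2.const_mul k).const_mul (C a)
    refine this.congr_deriv ?_
    simp only [hcdef]; ring
  have hcpos : ∀ t : ℝ, 0 < c t := fun t => mul_pos hCa (Real.cosh_pos _)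
  have hc1a : c1 a = 0 := by simp [hc1def]
  have hca : c a = C a := by simp [hcdef]
  have hc1cont : Continuous c1 := by
    fun_prop
  -- L facts
  have hLc : ContinuousOn L (Set.Icc a b) := hL.continuousOn
  have hL1 : ∀ t ∈ Set.Ioo a b, HasDerivAt L (deriv L t) t := by
    intro t ht
    have : ContDiffAt ℝ 2 L t := hL.contDiffAt (Icc_mem_nhds ht.1 ht.2)
    exact (this.differentiableAt (by norm_num)).hasDerivAt
  have hDL : ContDiffOn ℝ 1 (deriv L) (Set.Ioo a b) := by
    have := (hL.mono Set.Ioo_subset_Icc_self).deriv_of_isOpen (m := 1) isOpen_Ioo (by norm_num)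
    exact this
  have hL2 : ∀ t ∈ Set.Ioo a b, HasDerivAt (deriv L) (deriv (deriv L) t) t := by
    intro t ht
    have : ContDiffAt ℝ 1 (deriv L) t := hDL.contDiffAt (isOpen_Ioo.mem_nhds ht)
    exact (this.differentiableAt (by norm_num)).hasDerivAt
  -- the Wronskian
  set W : ℝ → ℝ := fun t => deriv L t * c t - L t * c1 t with hWdef
  have hWd : ∀ t ∈ Set.Ioo a b,
      HasDerivAt W (deriv (deriv L) t * c t - L t * (k^2 * c t)) t := by
    intro t ht
    have h := ((hL2 t ht).mul (hcd t)).sub ((hL1 t ht).mul (hc1d t))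
    refine h.congr_deriv ?_
    ring
  have hWmono : MonotoneOn W (Set.Ioo a b) := by
    apply monotoneOn_of_deriv_nonneg (convex_Ioo a b)
    · intro x hx
      exact ((hWd x hx).differentiableAt).continuousAt.continuousWithinAt
    · intro x hx
      rw [interior_Ioo] at hx
      exact ((hWd x hx).differentiableAt).differentiableWithinAt
    · intro x hx
      rw [interior_Ioo] at hx
      rw [(hWd x hx).deriv]
      have h1 := hL'' x hx
      have h2 := (hcpos x).le
      nlinarith [hcpos x]
  have hWnonneg : ∀ t ∈ Set.Ioo a b, 0 ≤ W t := by
    intro t ht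
    have hkey : ∀ s ∈ Set.Ioo a t, -(L s * c1 s) ≤ W t := by
      intro s hs
      have hsab : s ∈ Set.Ioo a b := ⟨hs.1, hs.2.trans ht.2⟩
      have h1 : W s ≤ W t := hWmono hsab ht (le_of_lt hs.2)
      have h2 : 0 < deriv L s * c s := mul_pos (hL' s hsab) (hcpos s)
      simp only [hWdef] at h1 ⊢
      linarith
    have hclos : a ∈ closure (Set.Ioo a t) := by
      rw [closure_Ioo (ne_of_lt ht.1)]
      exact Set.left_mem_Icc.mpr (le_of_lt ht.1)
    haveI : (𝓝[Set.Ioo a t] a).NeBot := mem_closure_iff_nhdsWithin_neBot.mp hclos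
    have hsub : Set.Ioo a t ⊆ Set.Icc a b :=
      fun s hs => ⟨le_of_lt hs.1, le_of_lt (hs.2.trans ht.2)⟩
    have hLat : Filter.Tendsto L (𝓝[Set.Ioo a t] a) (𝓝 (L a)) :=
      ((hLc a (Set.left_mem_Icc.mpr (le_of_lt hab))).tendsto).mono_left
        (nhdsWithin_mono a hsub)
    have htend : Filter.Tendsto (fun s => -(L s * c1 s)) (𝓝[Set.Ioo a t] a) (𝓝 0) := by
      have h2 : Filter.Tendsto c1 (𝓝[Set.Ioo a t] a) (𝓝 (c1 a)) :=
        (hc1cont.tendsto a).mono_left nhdsWithin_le_nhds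
      have := (hLat.mul h2).neg
      rw [hc1a] at this
      simpa using this
    exact le_of_tendsto htend (Filter.eventually_of_mem self_mem_nhdsWithin hkey)
  -- the ratio L / c is monotone on [a,b]
  set g : ℝ → ℝ := fun t => L t / c t with hgdef
  have hgd : ∀ t ∈ Set.Ioo a b, HasDerivAt g (W t / (c t)^2) t := by
    intro t ht
    have h := (hL1 t ht).div (hcd t) (ne_of_gt (hcpos t))
    exact h
  have hgmono : MonotoneOn g (Set.Icc a b) := by
    apply monotoneOn_of_deriv_nonneg (convex_Icc a b)
    · exact hLc.div (Continuous.continuousOn (by fun_prop)) (fun t _ => ne_of_gt (hcpos t))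
    · intro x hx
      rw [interior_Icc] at hx
      exact ((hgd x hx).differentiableAt).differentiableWithinAt
    · intro x hx
      rw [interior_Icc] at hx
      rw [(hgd x hx).deriv]
      exact div_nonneg (hWnonneg x hx) (sq_nonneg _)
  -- conclude
  intro t ht
  have h1 : g a ≤ g t := hgmono (Set.left_mem_Icc.mpr (le_of_lt hab)) ht (ht.1)
  simp only [hgdef] at h1
  rw [div_le_div_iff₀ (hcpos a) (hcpos t)] at h1
  rw [hC t]
  have hct : C a * Real.cosh (k*(t-a)) = c t := rfl
  rw [hct]
  rw [hca] at h1
  -- h1 : L a * c t ≤ L t * C a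
  have h2 : C a * c t ≤ L a * c t := mul_le_mul_of_nonneg_right hCL (hcpos t).le
  have h3 : C a * c t ≤ L t * C a := h2.trans h1
  have := (mul_le_mul_iff_left₀ hCa).mp (by linarith [h3] : c t * C a ≤ L t * C a)
  linarith
end
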